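/- Let Σ₀ be an invertible p×p real matrix with Θ₀ := Σ₀⁻¹ symmetric. Let Σ̂ and Θ̂ be p×p real matrices with Θ̂ symmetric, let λ ≥ 0, and let Ẑ be a p×p matrix with ‖Ẑ‖_∞ ≤ 1 such that the Karush–Kuhn–Tucker-type identity Σ̂ Θ̂ − I + λ Ẑ Θ̂ = 0 holds. Then the de-biased graphical Lasso remainder satisfies ‖2Θ̂ − Θ̂ Σ̂ Θ̂ − Θ₀ + Θ₀(Σ̂ − Σ₀)Θ₀‖_∞ ≤ |||Θ̂ − Θ₀|||₁ · ( ‖Σ̂ − Σ₀‖_∞ · |||Θ₀|||₁ + λ · |||Θ̂|||₁ ). -/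

import Mathlib

open Matrix
open scoped BigOperators

/-- Entrywise supremum norm of a matrix. -/
noncomputable def supNorm {p : ℕ} (A : Matrix (Fin p) (Fin p) ℝ) : ℝ :=
  ⨆ i, ⨆ j, |A i j|

/-- ℓ1-operator norm (maximum column ℓ1-norm) of a matrix. -/
noncomputable def opNorm1 {p : ℕ} (A : Matrix (Fin p) (Fin p) ℝ) : ℝ :=
  ⨆ j, ∑ i, |A i j|

/-!
Since `Θ₀ Σ₀ = I` and, by the KKT identity, `λ Ẑ Θ̂ = I − Σ̂ Θ̂`, the remainder equals
`λ (Θ̂ − Θ₀) Ẑ Θ̂ − Θ₀ (Σ̂ − Σ₀)(Θ̂ − Θ₀)`. Each entry of a triple product `A B C` is bounded by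
(ℓ1-norm of a row of `A`) · `‖B‖_∞` · (ℓ1-norm of a column of `C`), and for the symmetric matrices
`Θ̂ − Θ₀` and `Θ₀` row norms are column norms, hence bounded by `|||·|||₁`.
-/

theorem debiased_remainder_eq {R A : Type*} [CommRing R] [Ring A] [Algebra R A]
    {s₀ s θ θ₀ z : A} {c : R} (h₀ : θ₀ * s₀ = 1) (hkkt : s * θ - 1 + c • (z * θ) = 0) :
    (2 : R) • θ - θ * s * θ - θ₀ + θ₀ * (s - s₀) * θ₀ =
      c • ((θ - θ₀) * z * θ) - θ₀ * (s - s₀) * (θ - θ₀) := by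
  have hz : c • (z * θ) = 1 - s * θ := by
    rw [← sub_eq_zero, ← hkkt]; abel
  have hθ₀ (x : A) : θ₀ * (s₀ * x) = x := by rw [← mul_assoc, h₀, one_mul]
  rw [mul_assoc (θ - θ₀), ← mul_smul_comm, hz, two_smul]
  simp only [mul_sub, sub_mul, mul_one, mul_assoc, hθ₀]
  abel

theorem Matrix.abs_mul_mul_apply_le {R : Type*} [CommRing R] [LinearOrder R]
    [IsStrictOrderedRing R] {l m n o : Type*} [Fintype m] [Fintype n]
    (A : Matrix l m R) (B : Matrix m n R) (C : Matrix n o R)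
    {b : R} (hB : ∀ k k', |B k k'| ≤ b) (i : l) (j : o) :
    |(A * B * C) i j| ≤ (∑ k, |A i k|) * b * ∑ k', |C k' j| := by
  calc |(A * B * C) i j| = |∑ k, ∑ k', A i k * B k k' * C k' j| := by
        simp only [Matrix.mul_apply, Finset.sum_mul, Finset.sum_comm (γ := n)]
    _ ≤ ∑ k, ∑ k', |A i k| * |B k k'| * |C k' j| := by
        refine (Finset.abs_sum_le_sum_abs _ _).trans (Finset.sum_le_sum fun k _ => ?_)
        refine (Finset.abs_sum_le_sum_abs _ _).trans_eq ?_
        simp only [abs_mul]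
    _ ≤ ∑ k, ∑ k', |A i k| * b * |C k' j| := by gcongr with k _ k' _; exact hB k k'
    _ = (∑ k, |A i k|) * b * ∑ k', |C k' j| := by
        rw [Finset.sum_mul, Finset.sum_mul_sum]

section Norms

variable {p : ℕ}

theorem abs_le_supNorm (A : Matrix (Fin p) (Fin p) ℝ) (i j : Fin p) : |A i j| ≤ supNorm A :=
  (le_ciSup (Finite.bddAbove_range fun j => |A i j|) j).trans
    (le_ciSup (Finite.bddAbove_range fun i => ⨆ j, |A i j|) i)

theorem supNorm_nonneg (A : Matrix (Fin p) (Fin p) ℝ) : 0 ≤ supNorm A :=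
  Real.iSup_nonneg fun _ => Real.iSup_nonneg fun _ => abs_nonneg _

theorem supNorm_le {A : Matrix (Fin p) (Fin p) ℝ} {c : ℝ} (hc : 0 ≤ c)
    (h : ∀ i j, |A i j| ≤ c) : supNorm A ≤ c :=
  Real.iSup_le (fun i => Real.iSup_le (h i) hc) hc

theorem supNorm_sub_le (A B : Matrix (Fin p) (Fin p) ℝ) :
    supNorm (A - B) ≤ supNorm A + supNorm B :=
  supNorm_le (add_nonneg (supNorm_nonneg A) (supNorm_nonneg B)) fun i j =>
    (abs_sub (A i j) (B i j)).trans (add_le_add (abs_le_supNorm A i j) (abs_le_supNorm B i j))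

theorem supNorm_smul_le (c : ℝ) (A : Matrix (Fin p) (Fin p) ℝ) :
    supNorm (c • A) ≤ |c| * supNorm A :=
  supNorm_le (mul_nonneg (abs_nonneg c) (supNorm_nonneg A)) fun i j => by
    rw [Matrix.smul_apply, smul_eq_mul, abs_mul]
    exact mul_le_mul_of_nonneg_left (abs_le_supNorm A i j) (abs_nonneg c)

theorem sum_abs_le_opNorm1 (A : Matrix (Fin p) (Fin p) ℝ) (j : Fin p) :
    ∑ i, |A i j| ≤ opNorm1 A :=
  le_ciSup (Finite.bddAbove_range fun j => ∑ i, |A i j|) j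

theorem opNorm1_nonneg (A : Matrix (Fin p) (Fin p) ℝ) : 0 ≤ opNorm1 A :=
  Real.iSup_nonneg fun _ => Finset.sum_nonneg fun _ _ => abs_nonneg _

theorem Matrix.IsHermitian.sum_abs_row_le_opNorm1 {A : Matrix (Fin p) (Fin p) ℝ}
    (hA : A.IsHermitian) (i : Fin p) : ∑ k, |A i k| ≤ opNorm1 A := by
  simpa only [← hA.apply i, star_trivial] using sum_abs_le_opNorm1 A i

theorem supNorm_mul_mul_le {A : Matrix (Fin p) (Fin p) ℝ} (hA : A.IsHermitian)
    (B C : Matrix (Fin p) (Fin p) ℝ) :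
    supNorm (A * B * C) ≤ opNorm1 A * supNorm B * opNorm1 C := by
  have hA₁ := opNorm1_nonneg A
  have hB := supNorm_nonneg B
  have hC₁ := opNorm1_nonneg C
  refine supNorm_le (by positivity) fun i j =>
    (abs_mul_mul_apply_le A B C (abs_le_supNorm B) i j).trans ?_
  gcongr
  · exact hA.sum_abs_row_le_opNorm1 i
  · exact sum_abs_le_opNorm1 C j

end Norms

/-- bound on the remainder of the de-biased graphical Lasso.
`Σ₀` (= `S₀`) invertible with symmetric inverse `Θ₀ := Σ₀⁻¹`; `Θ̂` symmetric; `λ ≥ 0`;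
`Ẑ` with `‖Ẑ‖_∞ ≤ 1` satisfying the KKT identity `Σ̂Θ̂ − I + λẐΘ̂ = 0`.  Then
`‖2Θ̂ − Θ̂Σ̂Θ̂ − Θ₀ + Θ₀(Σ̂ − Σ₀)Θ₀‖_∞ ≤ |||Θ̂ − Θ₀|||₁ (‖Σ̂ − Σ₀‖_∞ |||Θ₀|||₁ + λ |||Θ̂|||₁)`. -/
theorem stmt3 {p : ℕ} (S₀ Shat Θhat Z : Matrix (Fin p) (Fin p) ℝ)
    (lam : ℝ) (hlam : 0 ≤ lam)
    (hS₀ : IsUnit S₀.det)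
    (Θ₀ : Matrix (Fin p) (Fin p) ℝ) (hΘ₀ : Θ₀ = S₀⁻¹)
    (hΘ₀sym : Θ₀.IsHermitian) (hΘhatsym : Θhat.IsHermitian)
    (hZ : supNorm Z ≤ 1)
    (hkkt : Shat * Θhat - 1 + lam • (Z * Θhat) = 0) :
    supNorm ((2 : ℝ) • Θhat - Θhat * Shat * Θhat - Θ₀ + Θ₀ * (Shat - S₀) * Θ₀) ≤
      opNorm1 (Θhat - Θ₀) * (supNorm (Shat - S₀) * opNorm1 Θ₀ + lam * opNorm1 Θhat) := by
  have hΘ₀S₀ : Θ₀ * S₀ = 1 := hΘ₀ ▸ nonsing_inv_mul S₀ hS₀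
  have hΔ : (Θhat - Θ₀).IsHermitian := hΘhatsym.sub hΘ₀sym
  have hΔ₁ := opNorm1_nonneg (Θhat - Θ₀)
  have hΘhat₁ := opNorm1_nonneg Θhat
  rw [debiased_remainder_eq hΘ₀S₀ hkkt]
  calc supNorm (lam • ((Θhat - Θ₀) * Z * Θhat) - Θ₀ * (Shat - S₀) * (Θhat - Θ₀))
      ≤ lam * supNorm ((Θhat - Θ₀) * Z * Θhat) + supNorm (Θ₀ * (Shat - S₀) * (Θhat - Θ₀)) := by
        grw [supNorm_sub_le, supNorm_smul_le, abs_of_nonneg hlam]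
    _ ≤ lam * (opNorm1 (Θhat - Θ₀) * 1 * opNorm1 Θhat) +
          opNorm1 Θ₀ * supNorm (Shat - S₀) * opNorm1 (Θhat - Θ₀) := by
        grw [supNorm_mul_mul_le hΔ, supNorm_mul_mul_le hΘ₀sym, hZ]
    _ = opNorm1 (Θhat - Θ₀) * (supNorm (Shat - S₀) * opNorm1 Θ₀ + lam * opNorm1 Θhat) := by
        ring
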